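/- arXiv:2410.23664 — 3 statements merged into one kernel-verified Lean document; each statement's English description precedes it below -/
import Mathlib

section
/- Let L be a distributive meet semi-lattice with top. For all a₁, …, aₙ ∈ L (n ≥ 1) and b ∈ L: ⋂ᵢ₌₁ⁿ ↑aᵢ ⊆ ↑b if and only if σ(b) ⊆ ⋃ᵢ₌₁ⁿ σ(aᵢ). -/
/-- A filter of a meet semi-lattice: a nonempty upper set closed under meets. -/
def IsSLFilter {L : Type*} [SemilatticeInf L] (F : Set L) : Prop :=
  F.Nonempty ∧ (∀ a b : L, a ∈ F → a ≤ b → b ∈ F) ∧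
    (∀ a b : L, a ∈ F → b ∈ F → a ⊓ b ∈ F)

/-- A prime (meet-prime) filter of a meet semi-lattice. -/
def IsSLPrimeFilter {L : Type*} [SemilatticeInf L] (F : Set L) : Prop :=
  IsSLFilter F ∧ F ≠ Set.univ ∧
    ∀ F₁ F₂ : Set L, IsSLFilter F₁ → IsSLFilter F₂ → F₁ ∩ F₂ ⊆ F → F₁ ⊆ F ∨ F₂ ⊆ F

/-- An ideal of a meet semi-lattice: a nonempty lower set in which any two
elements have a common upper bound lying in the ideal. -/
def IsSLIdeal {L : Type*} [SemilatticeInf L] (I : Set L) : Prop :=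
  I.Nonempty ∧ (∀ a b : L, a ∈ I → b ≤ a → b ∈ I) ∧
    (∀ a b : L, a ∈ I → b ∈ I → ∃ c ∈ I, a ≤ c ∧ b ≤ c)

/-- A meet semi-lattice is distributive. -/
def IsDistribSL (L : Type*) [SemilatticeInf L] : Prop :=
  ∀ a b₁ b₂ : L, b₁ ⊓ b₂ ≤ a → ∃ c₁ c₂ : L, b₁ ≤ c₁ ∧ b₂ ≤ c₂ ∧ a = c₁ ⊓ c₂

/-- A Frink ideal of a meet semi-lattice. -/
def IsFrinkIdeal {L : Type*} [SemilatticeInf L] (I : Set L) : Prop :=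
  I.Nonempty ∧ ∀ A : Finset L, A.Nonempty → ↑A ⊆ I →
    ∀ c : L, (⋂ a ∈ A, Set.Ici a) ⊆ Set.Ici c → c ∈ I

/-- An optimal filter: a filter whose complement is a Frink ideal. -/
def IsOptimalFilter {L : Type*} [SemilatticeInf L] (F : Set L) : Prop :=
  IsSLFilter F ∧ IsFrinkIdeal Fᶜ

/-- σ(a): the set of prime filters containing `a`. -/
def sigmaSet {L : Type*} [SemilatticeInf L] (a : L) : Set (Set L) :=
  {P | IsSLPrimeFilter P ∧ a ∈ P}

/-- φ(a): the set of optimal filters containing `a`. -/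
def phiSet {L : Type*} [SemilatticeInf L] (a : L) : Set (Set L) :=
  {F | IsOptimalFilter F ∧ a ∈ F}

lemma isSLFilter_Ici {L : Type*} [SemilatticeInf L] (a : L) : IsSLFilter (Set.Ici a) :=
  ⟨⟨a, le_refl a⟩, fun _ _ h h' => le_trans h h', fun _ _ h h' => le_inf h h'⟩

lemma isSLFilter_biInter_Ici {L : Type*} [SemilatticeInf L] [OrderTop L] (A : Finset L) :
    IsSLFilter (⋂ a ∈ A, Set.Ici a) := by
  refine ⟨⟨⊤, ?_⟩, ?_, ?_⟩
  · simp
  · intro x y hx hxy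
    simp only [Set.mem_iInter, Set.mem_Ici] at hx ⊢
    exact fun a ha => le_trans (hx a ha) hxy
  · intro x y hx hy
    simp only [Set.mem_iInter, Set.mem_Ici] at hx hy ⊢
    exact fun a ha => le_inf (hx a ha) (hy a ha)

lemma prime_covers {L : Type*} [SemilatticeInf L] [OrderTop L] {P : Set L}
    (hP : IsSLPrimeFilter P) (A : Finset L) (hA : A.Nonempty)
    (h : (⋂ a ∈ A, Set.Ici a) ⊆ P) : ∃ a ∈ A, a ∈ P := by
  induction hA using Finset.Nonempty.cons_induction with
  | singleton a =>
    refine ⟨a, Finset.mem_singleton_self a, h ?_⟩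
    simp
  | cons a s ha hs ih =>
    have hsplit : (⋂ x ∈ Finset.cons a s ha, Set.Ici x)
        = Set.Ici a ∩ ⋂ x ∈ s, Set.Ici x := by
      simp [Finset.cons_eq_insert, Set.biInter_insert]
    rw [hsplit] at h
    rcases hP.2.2 _ _ (isSLFilter_Ici a) (isSLFilter_biInter_Ici s) h with h1 | h2
    · exact ⟨a, Finset.mem_cons_self a s, h1 (le_refl a)⟩
    · obtain ⟨x, hx, hxP⟩ := ih h2
      exact ⟨x, Finset.mem_cons_of_mem hx, hxP⟩

lemma exists_prime_filter {L : Type*} [SemilatticeInf L] (hd : IsDistribSL L)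
    {b x : L} (h : ¬ b ≤ x) : ∃ P : Set L, IsSLPrimeFilter P ∧ b ∈ P ∧ x ∉ P := by
  set S : Set (Set L) := {F | IsSLFilter F ∧ b ∈ F ∧ x ∉ F} with hS
  have hbS : Set.Ici b ∈ S := ⟨isSLFilter_Ici b, le_refl b, h⟩
  have hchainC : ∀ c ⊆ S, IsChain (· ⊆ ·) c → c.Nonempty →
      ∃ ub ∈ S, ∀ s ∈ c, s ⊆ ub := by
    intro c hcS hchain hcne
    refine ⟨⋃₀ c, ⟨⟨?_, ?_, ?_⟩, ?_, ?_⟩, fun s hs => Set.subset_sUnion_of_mem hs⟩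
    · obtain ⟨t, ht⟩ := hcne
      exact ⟨b, Set.mem_sUnion.mpr ⟨t, ht, (hcS ht).2.1⟩⟩
    · rintro z w ⟨t, ht, hz⟩ hzw
      exact ⟨t, ht, (hcS ht).1.2.1 _ _ hz hzw⟩
    · rintro z w ⟨t, ht, hz⟩ ⟨t', ht', hw⟩
      rcases hchain.total ht ht' with hsub | hsub
      · exact ⟨t', ht', (hcS ht').1.2.2 _ _ (hsub hz) hw⟩
      · exact ⟨t, ht, (hcS ht).1.2.2 _ _ hz (hsub hw)⟩
    · obtain ⟨t, ht⟩ := hcne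
      exact ⟨t, ht, (hcS ht).2.1⟩
    · rintro ⟨t, ht, hxt⟩
      exact (hcS ht).2.2 hxt
  obtain ⟨F, _, hmax⟩ := zorn_subset_nonempty S hchainC _ hbS
  obtain ⟨⟨hFfil, hbF, hxF⟩, hmax2⟩ := hmax
  have hFne : F ≠ Set.univ := fun hu => hxF (hu ▸ Set.mem_univ x)
  -- key: for u ∉ F, there is f ∈ F with f ⊓ u ≤ x
  have key : ∀ u : L, u ∉ F → ∃ f ∈ F, f ⊓ u ≤ x := by
    intro u hu
    set G : Set L := {z | ∃ f ∈ F, f ⊓ u ≤ z} with hG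
    have hGfil : IsSLFilter G := by
      refine ⟨⟨u, b, hbF, inf_le_right⟩, ?_, ?_⟩
      · rintro z w ⟨f, hf, hle⟩ hzw
        exact ⟨f, hf, le_trans hle hzw⟩
      · rintro z w ⟨f, hf, hle⟩ ⟨g, hg, hle'⟩
        refine ⟨f ⊓ g, hFfil.2.2 _ _ hf hg, le_inf ?_ ?_⟩
        · exact le_trans (inf_le_inf_right u inf_le_left) hle
        · exact le_trans (inf_le_inf_right u inf_le_right) hle'
    have hFG : F ⊆ G := fun f hf => ⟨f, hf, inf_le_left⟩
    by_cases hxG : x ∈ G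
    · exact hxG
    · have hGS : G ∈ S := ⟨hGfil, hFG hbF, hxG⟩
      have := hmax2 hGS hFG
      exact absurd (this ⟨b, hbF, inf_le_right⟩) hu
  refine ⟨F, ⟨hFfil, hFne, ?_⟩, hbF, hxF⟩
  intro F₁ F₂ hF₁ hF₂ hsub
  by_contra hcon
  push_neg at hcon
  obtain ⟨hn1, hn2⟩ := hcon
  obtain ⟨u, hu1, huF⟩ := Set.not_subset.mp hn1
  obtain ⟨v, hv2, hvF⟩ := Set.not_subset.mp hn2
  obtain ⟨f₁, hf₁, hle₁⟩ := key u huF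
  obtain ⟨f₂, hf₂, hle₂⟩ := key v hvF
  obtain ⟨c₁, d₁, hc₁, hd₁, hx₁⟩ := hd x f₁ u hle₁
  obtain ⟨c₂, d₂, hc₂, hd₂, hx₂⟩ := hd x f₂ v hle₂
  -- c₂ ⊓ d₂ = x ≤ d₁
  have hxd₁ : c₂ ⊓ d₂ ≤ d₁ := hx₂ ▸ (hx₁ ▸ inf_le_right : x ≤ d₁)
  obtain ⟨e, e', he, he', hd₁eq⟩ := hd d₁ c₂ d₂ hxd₁
  have he'F₂ : e' ∈ F₂ := hF₂.2.1 _ _ (hF₂.2.1 _ _ hv2 hd₂) he'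
  have hd₁F₁ : d₁ ∈ F₁ := hF₁.2.1 _ _ hu1 hd₁
  have he'F₁ : e' ∈ F₁ := hF₁.2.1 _ _ hd₁F₁ (hd₁eq ▸ inf_le_right)
  have he'F : e' ∈ F := hsub ⟨he'F₁, he'F₂⟩
  have heF : e ∈ F := hFfil.2.1 _ _ (hFfil.2.1 _ _ hf₂ hc₂) he
  have hd₁F : d₁ ∈ F := hd₁eq ▸ hFfil.2.2 _ _ heF he'F
  have hc₁F : c₁ ∈ F := hFfil.2.1 _ _ hf₁ hc₁
  exact hxF (hx₁ ▸ hFfil.2.2 _ _ hc₁F hd₁F)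

/-- ⋂ᵢ ↑aᵢ ⊆ ↑b iff σ(b) ⊆ ⋃ᵢ σ(aᵢ), for distributive meet semi-lattices with top. -/
theorem iInter_Ici_subset_iff_sigma_subset {L : Type*} [SemilatticeInf L] [OrderTop L]
    (hd : IsDistribSL L) (A : Finset L) (hA : A.Nonempty) (b : L) :
    (⋂ a ∈ A, Set.Ici a) ⊆ Set.Ici b ↔ sigmaSet b ⊆ ⋃ a ∈ A, sigmaSet a := by
  constructor
  · intro h P hP
    obtain ⟨hPprime, hbP⟩ := hP
    have hsub : (⋂ a ∈ A, Set.Ici a) ⊆ P := fun z hz =>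
      hPprime.1.2.1 _ _ hbP (h hz)
    obtain ⟨a, haA, haP⟩ := prime_covers hPprime A hA hsub
    exact Set.mem_biUnion haA ⟨hPprime, haP⟩
  · intro h x hx
    by_contra hbx
    obtain ⟨P, hPprime, hbP, hxP⟩ := exists_prime_filter hd hbx
    obtain ⟨a, haA, ⟨_, haP⟩⟩ := Set.mem_iUnion₂.mp (h ⟨hPprime, hbP⟩)
    have hax : a ≤ x := by
      simp only [Set.mem_iInter, Set.mem_Ici] at hx
      exact hx a haA
    exact hxP (hPprime.1.2.1 _ _ haP hax)
end

section
/- Let L be a bounded distributive meet semi-lattice (with ⊤ and ⊥). An optimal filter x of L is a prime filter if and only if the family {φ(a) : a ∈ L, a ∉ x} is directed, i.e., for all a, b ∈ L with a ∉ x and b ∉ x there exists c ∈ L with c ∉ x and φ(a) ∪ φ(b) ⊆ φ(c). -/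
lemma frink_lower {L : Type*} [SemilatticeInf L] {I : Set L} (hI : IsFrinkIdeal I)
    {a b : L} (ha : a ∈ I) (hba : b ≤ a) : b ∈ I := by
  refine hI.2 {a} ⟨a, by simp⟩ (by simpa) b ?_
  intro d hd
  simp only [Finset.mem_singleton, Set.mem_iInter, Set.mem_Ici] at hd
  exact hba.trans (hd a rfl)

/-- Separation: if `¬ a ≤ c` then there is an optimal filter containing `a` but not `c`. -/
lemma exists_optimal_sep {L : Type*} [SemilatticeInf L] (hd : IsDistribSL L)
    {a c : L} (h : ¬ a ≤ c) : ∃ F : Set L, IsOptimalFilter F ∧ a ∈ F ∧ c ∉ F := by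
  classical
  set S : Set (Set L) := {J | IsFrinkIdeal J ∧ J ∩ Set.Ici a = ∅} with hS
  have hIic : Set.Iic c ∈ S := by
    refine ⟨⟨⟨c, le_refl c⟩, ?_⟩, ?_⟩
    · intro A hA hAI d hdub
      have hc : c ∈ ⋂ e ∈ A, Set.Ici e := by
        simp only [Set.mem_iInter, Set.mem_Ici]
        exact fun e he => hAI he
      exact hdub hc
    · rw [Set.eq_empty_iff_forall_notMem]
      rintro y ⟨h1, h2⟩
      exact h (le_trans h2 h1)
  have hchains : ∀ ch ⊆ S, IsChain (· ⊆ ·) ch → ch.Nonempty →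
      ∃ ub ∈ S, ∀ s ∈ ch, s ⊆ ub := by
    intro ch hchS hchain hne
    refine ⟨⋃₀ ch, ⟨⟨?_, ?_⟩, ?_⟩, fun s hs => Set.subset_sUnion_of_mem hs⟩
    · obtain ⟨J₀, hJ₀⟩ := hne
      obtain ⟨y, hy⟩ := (hchS hJ₀).1.1
      exact ⟨y, J₀, hJ₀, hy⟩
    · intro A hA hAI d hdub
      have hdir : DirectedOn (fun i j : Set L => id i ⊆ id j) ch := by
        intro i hi j hj
        rcases hchain.total hi hj with hij | hij
        · exact ⟨j, hj, hij, le_refl _⟩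
        · exact ⟨i, hi, le_refl _, hij⟩
      have hAsub : (A : Set L) ⊆ ⋃ i ∈ ch, id i := by
        intro y hy
        obtain ⟨t, ht, hyt⟩ := hAI hy
        exact Set.mem_biUnion ht hyt
      obtain ⟨J₀, hJ₀, hAJ₀⟩ := hdir.exists_mem_subset_of_finset_subset_biUnion hne hAsub
      exact Set.subset_sUnion_of_mem hJ₀ ((hchS hJ₀).1.2 A hA hAJ₀ d hdub)
    · rw [Set.eq_empty_iff_forall_notMem]
      rintro y ⟨⟨t, ht, hyt⟩, hy2⟩
      have := (hchS ht).2
      rw [Set.eq_empty_iff_forall_notMem] at this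
      exact this y ⟨hyt, hy2⟩
  obtain ⟨J, hJc, hJmax⟩ := zorn_subset_nonempty S hchains _ hIic
  have hJ := (hJmax.prop).1
  have hJdis := (hJmax.prop).2
  have haJ : a ∉ J := by
    intro haJ
    rw [Set.eq_empty_iff_forall_notMem] at hJdis
    exact hJdis a ⟨haJ, le_refl a⟩
  -- key: for d ∉ J, the Frink ideal generated by J ∪ {d} meets Ici a
  have key : ∀ d : L, d ∉ J → ∃ f : L, a ≤ f ∧ ∃ A : Finset L, ↑A ⊆ J ∧
      (⋂ e ∈ insert d A, Set.Ici e) ⊆ Set.Ici f := by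
    intro d hdJ
    set J' : Set L := {g | ∃ A : Finset L, ↑A ⊆ J ∧ (⋂ e ∈ insert d A, Set.Ici e) ⊆ Set.Ici g}
      with hJ'
    have hJsub : J ⊆ J' := by
      intro j hj
      refine ⟨{j}, by simpa, ?_⟩
      intro y hy
      simp only [Set.mem_iInter, Set.mem_Ici, Finset.mem_insert, Finset.mem_singleton] at hy
      exact hy j (Or.inr rfl)
    have hdJ' : d ∈ J' := by
      refine ⟨∅, by simp, ?_⟩
      intro y hy
      simp only [Set.mem_iInter, Set.mem_Ici, Finset.mem_insert] at hy
      exact hy d (Or.inl rfl)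
    have hJ'frink : IsFrinkIdeal J' := by
      refine ⟨⟨d, hdJ'⟩, ?_⟩
      intro B hB hBJ' g hg
      -- choose witnesses
      choose W hW1 hW2 using fun (b : L) (hb : b ∈ B) => hBJ' hb
      classical
      refine ⟨B.attach.biUnion (fun b => W b.1 (by simpa using b.2)), ?_, ?_⟩
      · intro y hy
        simp only [Finset.coe_biUnion, Set.mem_iUnion, Finset.mem_coe] at hy
        obtain ⟨b, hb, hyb⟩ := hy
        exact hW1 _ _ hyb
      · intro y hy
        simp only [Set.mem_iInter, Set.mem_Ici, Finset.mem_insert, Finset.mem_biUnion,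
          Finset.mem_attach, true_and, Subtype.exists] at hy
        refine hg ?_
        simp only [Set.mem_iInter, Set.mem_Ici]
        intro b hb
        refine hW2 b hb ?_
        simp only [Set.mem_iInter, Set.mem_Ici, Finset.mem_insert]
        rintro e (rfl | he)
        · exact hy e (Or.inl rfl)
        · exact hy e (Or.inr ⟨b, hb, he⟩)
    have hJ'ne : J' ∉ S := by
      intro hJ'S
      have : J' ⊆ J := hJmax.2 hJ'S hJsub
      exact hdJ (this hdJ')
    rw [hS, Set.mem_setOf_eq] at hJ'ne
    push_neg at hJ'ne
    obtain ⟨f, hf1, hf2⟩ := hJ'ne hJ'frink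
    obtain ⟨A, hA1, hA2⟩ := hf1
    exact ⟨f, hf2, A, hA1, hA2⟩
  refine ⟨Jᶜ, ⟨⟨⟨a, haJ⟩, ?_, ?_⟩, by rwa [compl_compl]⟩, haJ, ?_⟩
  · -- upper set
    intro p q hp hpq hq'
    exact hp (frink_lower hJ (by exact not_not.mp (fun hh => hh hq')) hpq)
  · -- meets
    intro p q hp hq
    intro hpq
    obtain ⟨f₁, haf₁, A₁, hA₁, hub₁⟩ := key p hp
    obtain ⟨f₂, haf₂, A₂, hA₂, hub₂⟩ := key q hq
    classical
    have hmem : f₁ ⊓ f₂ ∈ J := by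
      refine hJ.2 (insert (p ⊓ q) (A₁ ∪ A₂)) ⟨p ⊓ q, by simp⟩ ?_ _ ?_
      · intro y hy
        simp only [Finset.coe_insert, Set.mem_insert_iff, Finset.coe_union,
          Set.mem_union, Finset.mem_coe] at hy
        rcases hy with rfl | hy | hy
        · exact not_not.mp (fun hh => hh hpq)
        · exact hA₁ hy
        · exact hA₂ hy
      · intro y hy
        simp only [Set.mem_iInter, Set.mem_Ici, Finset.mem_insert, Finset.mem_union] at hy
        have hpqy : p ⊓ q ≤ y := hy _ (Or.inl rfl)
        obtain ⟨c₁, c₂, hpc₁, hqc₂, hyeq⟩ := hd y p q hpqy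
        have hc₁ : f₁ ≤ c₁ := by
          refine hub₁ ?_
          simp only [Set.mem_iInter, Set.mem_Ici, Finset.mem_insert]
          rintro e (rfl | he)
          · exact hpc₁
          · exact le_trans (hy e (Or.inr (Or.inl he))) (hyeq ▸ inf_le_left)
        have hc₂ : f₂ ≤ c₂ := by
          refine hub₂ ?_
          simp only [Set.mem_iInter, Set.mem_Ici, Finset.mem_insert]
          rintro e (rfl | he)
          · exact hqc₂
          · exact le_trans (hy e (Or.inr (Or.inr he))) (hyeq ▸ inf_le_right)
        calc f₁ ⊓ f₂ ≤ c₁ ⊓ c₂ := inf_le_inf hc₁ hc₂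
        _ = y := hyeq.symm
    rw [Set.eq_empty_iff_forall_notMem] at hJdis
    exact hJdis (f₁ ⊓ f₂) ⟨hmem, le_inf haf₁ haf₂⟩
  · intro hcJ
    exact hcJ (hJc (le_refl c))

/-- An optimal filter is prime iff the family of φ(a) with a ∉ x is directed. -/
theorem prime_iff_directed {L : Type*} [SemilatticeInf L] [OrderTop L] [OrderBot L]
    (hd : IsDistribSL L) (x : Set L) (hx : IsOptimalFilter x) :
    IsSLPrimeFilter x ↔
      ∀ a b : L, a ∉ x → b ∉ x →
        ∃ c : L, c ∉ x ∧ phiSet a ∪ phiSet b ⊆ phiSet c := by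
  constructor
  · rintro ⟨hxf, hxu, hxp⟩ a b ha hb
    have hfa : IsSLFilter (Set.Ici a) :=
      ⟨⟨a, le_refl a⟩, fun p q hp hpq => le_trans hp hpq,
        fun p q hp hq => le_inf hp hq⟩
    have hfb : IsSLFilter (Set.Ici b) :=
      ⟨⟨b, le_refl b⟩, fun p q hp hpq => le_trans hp hpq,
        fun p q hp hq => le_inf hp hq⟩
    have hnot : ¬ (Set.Ici a ∩ Set.Ici b ⊆ x) := by
      intro hsub
      rcases hxp _ _ hfa hfb hsub with h1 | h1
      · exact ha (h1 (le_refl a))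
      · exact hb (h1 (le_refl b))
    rw [Set.not_subset] at hnot
    obtain ⟨c, ⟨hac, hbc⟩, hcx⟩ := hnot
    refine ⟨c, hcx, ?_⟩
    rintro F (⟨hF, haF⟩ | ⟨hF, hbF⟩)
    · exact ⟨hF, hF.1.2.1 a c haF hac⟩
    · exact ⟨hF, hF.1.2.1 b c hbF hbc⟩
  · intro hdir
    refine ⟨hx.1, ?_, ?_⟩
    · intro heq
      obtain ⟨y, hy⟩ := hx.2.1
      rw [heq] at hy
      exact hy (Set.mem_univ y)
    · intro F₁ F₂ hF₁ hF₂ hsub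
      by_contra hcon
      push_neg at hcon
      obtain ⟨h1, h2⟩ := hcon
      rw [Set.not_subset] at h1 h2
      obtain ⟨a, haF, hax⟩ := h1
      obtain ⟨b, hbF, hbx⟩ := h2
      obtain ⟨c, hcx, hphi⟩ := hdir a b hax hbx
      have hac : a ≤ c := by
        by_contra hnac
        obtain ⟨F, hFopt, haFF, hcFF⟩ := exists_optimal_sep hd hnac
        exact hcFF (hphi (Or.inl ⟨hFopt, haFF⟩)).2
      have hbc : b ≤ c := by
        by_contra hnbc
        obtain ⟨F, hFopt, hbFF, hcFF⟩ := exists_optimal_sep hd hnbc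
        exact hcFF (hphi (Or.inr ⟨hFopt, hbFF⟩)).2
      exact hcx (hsub ⟨hF₁.2.1 a c haF hac, hF₂.2.1 b c hbF hbc⟩)
end

section
/- Let L be a bounded distributive meet semi-lattice (with ⊤ and ⊥) and let U be a clopen upper set (with respect to inclusion of filters) in L_*. Then U = φ(a) for some a ∈ L if and only if L_* ∖ U = ↓(L₊ ∖ U), where ↓S denotes the set of optimal filters that are contained in some member of S. -/
/-- The dual space of a distributive meet semi-lattice: its points are the
optimal filters. -/
structure OptSpace (L : Type*) [SemilatticeInf L] where
  carrier : Set L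
  optimal : IsOptimalFilter carrier

/-- φ(a) as a subset of the dual space. -/
def phiO {L : Type*} [SemilatticeInf L] (a : L) : Set (OptSpace L) :=
  {x | a ∈ x.carrier}

/-- The Priestley-like topology on the dual space, generated by the subbasis
{φ(a) : a ∈ L} ∪ {φ(b)ᶜ : b ∈ L}. -/
instance OptSpace.instTopologicalSpace (L : Type*) [SemilatticeInf L] :
    TopologicalSpace (OptSpace L) :=
  TopologicalSpace.generateFrom
    ({U | ∃ a : L, U = phiO a} ∪ {U | ∃ b : L, U = (phiO b)ᶜ})

section Auxiliary

open Set

variable {L : Type*} [SemilatticeInf L]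

lemma SLAux.top_mem [OrderTop L] {F : Set L} (hF : IsSLFilter F) : (⊤ : L) ∈ F := by
  obtain ⟨a, ha⟩ := hF.1
  exact hF.2.1 a ⊤ ha le_top

lemma SLAux.ici_filter (a : L) : IsSLFilter (Set.Ici a) :=
  ⟨⟨a, le_refl a⟩, fun _ _ hx hxy => le_trans hx hxy, fun _ _ hx hy => le_inf hx hy⟩

lemma SLAux.ub_of_directed {S : Set L} (hne : S.Nonempty)
    (hdir : ∀ b₁ ∈ S, ∀ b₂ ∈ S, ∃ d ∈ S, b₁ ≤ d ∧ b₂ ≤ d) :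
    ∀ A : Finset L, ↑A ⊆ S → ∃ d ∈ S, ∀ b ∈ A, b ≤ d := by
  classical
  intro A
  induction A using Finset.induction_on with
  | empty =>
    intro _
    obtain ⟨w, hw⟩ := hne
    exact ⟨w, hw, by simp⟩
  | @insert a A ha ih =>
    intro hA
    have haS : a ∈ S := hA (by simp)
    have hAS : ↑A ⊆ S := fun b hb => hA (by simp [hb])
    obtain ⟨d', hd', hub'⟩ := ih hAS
    obtain ⟨d, hd, had, hdd⟩ := hdir a haS d' hd'
    refine ⟨d, hd, fun b hb => ?_⟩
    rcases Finset.mem_insert.1 hb with rfl | hb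
    · exact had
    · exact (hub' b hb).trans hdd

lemma SLAux.compl_directed_of_prime {P : Set L} (hP : IsSLPrimeFilter P) :
    ∀ b₁ ∈ Pᶜ, ∀ b₂ ∈ Pᶜ, ∃ d ∈ Pᶜ, b₁ ≤ d ∧ b₂ ≤ d := by
  intro b₁ hb₁ b₂ hb₂
  by_contra h
  push_neg at h
  have hsub : Set.Ici b₁ ∩ Set.Ici b₂ ⊆ P := by
    intro d hd
    by_contra hdP
    exact (h d hdP hd.1 hd.2).elim
  rcases hP.2.2 (Set.Ici b₁) (Set.Ici b₂) (SLAux.ici_filter b₁) (SLAux.ici_filter b₂) hsub with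
    h1 | h2
  · exact hb₁ (h1 le_rfl)
  · exact hb₂ (h2 le_rfl)

lemma SLAux.optimal_of_compl_directed {P : Set L} (hP : IsSLFilter P)
    (hne : ∃ w, w ∉ P)
    (hdir : ∀ b₁ ∈ Pᶜ, ∀ b₂ ∈ Pᶜ, ∃ d ∈ Pᶜ, b₁ ≤ d ∧ b₂ ≤ d) : IsOptimalFilter P := by
  obtain ⟨w, hw⟩ := hne
  refine ⟨hP, ⟨w, hw⟩, ?_⟩
  intro A _ hA c hc
  obtain ⟨d, hdS, hub⟩ := SLAux.ub_of_directed ⟨w, hw⟩ hdir A hA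
  have hd : d ∈ ⋂ a ∈ A, Set.Ici a := Set.mem_iInter₂.2 fun a ha => hub a ha
  have hcd : c ≤ d := hc hd
  intro hcP
  exact hdS (hP.2.1 c d hcP hcd)

lemma SLAux.prime_optimal {P : Set L} (hP : IsSLPrimeFilter P) : IsOptimalFilter P :=
  SLAux.optimal_of_compl_directed hP.1
    ((Set.ne_univ_iff_exists_notMem P).1 hP.2.1)
    (SLAux.compl_directed_of_prime hP)

/-- Prime filter extension lemma: any filter avoiding `a` extends to a prime
filter avoiding `a`. -/
lemma SLAux.prime_extension (hd : IsDistribSL L) {F : Set L} {a : L}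
    (hF : IsSLFilter F) (ha : a ∉ F) :
    ∃ P : Set L, IsSLPrimeFilter P ∧ IsOptimalFilter P ∧ F ⊆ P ∧ a ∉ P := by
  classical
  set S : Set (Set L) := {G | IsSLFilter G ∧ F ⊆ G ∧ ∀ t ∈ G, ¬ t ≤ a} with hS
  have hFS : F ∈ S := ⟨hF, subset_rfl, fun t ht hta => ha (hF.2.1 t a ht hta)⟩
  have hchain : ∀ c ⊆ S, IsChain (· ⊆ ·) c → c.Nonempty → ∃ ub ∈ S, ∀ s ∈ c, s ⊆ ub := by
    intro c hcS hchain ⟨G₀, hG₀⟩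
    refine ⟨⋃₀ c, ⟨⟨?_, ?_, ?_⟩, ?_, ?_⟩, fun s hs => subset_sUnion_of_mem hs⟩
    · obtain ⟨x, hx⟩ := (hcS hG₀).1.1
      exact ⟨x, G₀, hG₀, hx⟩
    · rintro x y ⟨G, hG, hxG⟩ hxy
      exact ⟨G, hG, (hcS hG).1.2.1 x y hxG hxy⟩
    · rintro x y ⟨G₁, hG₁, hx⟩ ⟨G₂, hG₂, hy⟩
      rcases hchain.total hG₁ hG₂ with h | h
      · exact ⟨G₂, hG₂, (hcS hG₂).1.2.2 x y (h hx) hy⟩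
      · exact ⟨G₁, hG₁, (hcS hG₁).1.2.2 x y hx (h hy)⟩
    · exact ((hcS hG₀).2.1).trans (subset_sUnion_of_mem hG₀)
    · rintro t ⟨G, hG, htG⟩ hta
      exact (hcS hG).2.2 t htG hta
  obtain ⟨P, hFP, hPS, hmax⟩ := zorn_subset_nonempty S hchain F hFS
  have hPfil : IsSLFilter P := hPS.1
  have hPa : ∀ t ∈ P, ¬ t ≤ a := hPS.2.2
  have haP : a ∉ P := fun h => hPa a h le_rfl
  -- the complement of P is directed
  have hQ : ∀ b, b ∉ P → ∃ p ∈ P, p ⊓ b ≤ a := by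
    intro b hb
    set Q : Set L := {x | ∃ p ∈ P, p ⊓ b ≤ x} with hQdef
    obtain ⟨p₀, hp₀⟩ := hPfil.1
    have hbQ : b ∈ Q := ⟨p₀, hp₀, inf_le_right⟩
    have hQfil : IsSLFilter Q := by
      refine ⟨⟨b, hbQ⟩, ?_, ?_⟩
      · rintro x y ⟨p, hp, hpx⟩ hxy
        exact ⟨p, hp, hpx.trans hxy⟩
      · rintro x y ⟨p, hp, hpx⟩ ⟨q, hq, hqy⟩
        refine ⟨p ⊓ q, hPfil.2.2 p q hp hq, le_inf ?_ ?_⟩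
        · exact le_trans (inf_le_inf_right b inf_le_left) hpx
        · exact le_trans (inf_le_inf_right b inf_le_right) hqy
    have hPQ : P ⊆ Q := fun x hx => ⟨x, hx, inf_le_left⟩
    by_contra h
    push_neg at h
    have hQS : Q ∈ S := by
      refine ⟨hQfil, hPS.2.1.trans hPQ, ?_⟩
      rintro t ⟨p, hp, hpt⟩ hta
      exact h p hp (hpt.trans hta)
    exact hb ((hmax hQS hPQ) hbQ)
  have hdir : ∀ b₁ ∈ Pᶜ, ∀ b₂ ∈ Pᶜ, ∃ d ∈ Pᶜ, b₁ ≤ d ∧ b₂ ≤ d := by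
    intro b₁ hb₁ b₂ hb₂
    obtain ⟨p₁, hp₁, h₁⟩ := hQ b₁ hb₁
    obtain ⟨p₂, hp₂, h₂⟩ := hQ b₂ hb₂
    set p := p₁ ⊓ p₂ with hpdef
    have hp : p ∈ P := hPfil.2.2 p₁ p₂ hp₁ hp₂
    have h₁' : p ⊓ b₁ ≤ a := le_trans (inf_le_inf_right b₁ inf_le_left) h₁
    have h₂' : p ⊓ b₂ ≤ a := le_trans (inf_le_inf_right b₂ inf_le_right) h₂
    obtain ⟨e₁, f₁, hpe, hbf, hae⟩ := hd a p b₁ h₁'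
    have hpb₂f : p ⊓ b₂ ≤ f₁ := h₂'.trans (hae ▸ inf_le_right)
    obtain ⟨g, d, hpg, hbd, hf⟩ := hd f₁ p b₂ hpb₂f
    have hfd : f₁ ≤ d := hf ▸ inf_le_right
    refine ⟨d, ?_, hbf.trans hfd, hbd⟩
    intro hdP
    have hgP : g ∈ P := hPfil.2.1 p g hp hpg
    have hf₁P : f₁ ∈ P := by
      rw [hf]; exact hPfil.2.2 g d hgP hdP
    have he₁P : e₁ ∈ P := hPfil.2.1 p e₁ hp hpe
    have haP' : a ∈ P := by
      rw [hae]; exact hPfil.2.2 e₁ f₁ he₁P hf₁P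
    exact hPa a haP' le_rfl
  have hPprime : IsSLPrimeFilter P := by
    refine ⟨hPfil, (Set.ne_univ_iff_exists_notMem P).2 ⟨a, haP⟩, ?_⟩
    intro F₁ F₂ h₁ h₂ hsub
    by_contra h
    push_neg at h
    obtain ⟨hn₁, hn₂⟩ := h
    obtain ⟨b₁, hb₁F, hb₁P⟩ := Set.not_subset.1 hn₁
    obtain ⟨b₂, hb₂F, hb₂P⟩ := Set.not_subset.1 hn₂
    obtain ⟨dd, hdP, hd₁, hd₂⟩ := hdir b₁ hb₁P b₂ hb₂P
    exact hdP (hsub ⟨h₁.2.1 b₁ dd hb₁F hd₁, h₂.2.1 b₂ dd hb₂F hd₂⟩)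
  exact ⟨P, hPprime, SLAux.optimal_of_compl_directed hPfil ⟨a, haP⟩ hdir, hFP, haP⟩

lemma SLAux.phiO_mono {a b : L} (h : a ≤ b) : phiO a ⊆ phiO b :=
  fun x hx => x.optimal.1.2.1 a b hx h

lemma SLAux.phiO_top [OrderTop L] : phiO (⊤ : L) = Set.univ :=
  Set.eq_univ_of_forall fun x => SLAux.top_mem x.optimal.1

lemma SLAux.phiO_bot [OrderBot L] : phiO (⊥ : L) = (∅ : Set (OptSpace L)) := by
  ext x
  simp only [Set.mem_empty_iff_false, iff_false]
  intro hx
  obtain ⟨w, hw⟩ := x.optimal.2.1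
  exact hw (x.optimal.1.2.1 ⊥ w hx bot_le)

lemma SLAux.isOpen_phiO (a : L) : IsOpen (phiO a : Set (OptSpace L)) :=
  TopologicalSpace.isOpen_generateFrom_of_mem (Or.inl ⟨a, rfl⟩)

lemma SLAux.isOpen_compl_phiO (b : L) : IsOpen ((phiO b)ᶜ : Set (OptSpace L)) :=
  TopologicalSpace.isOpen_generateFrom_of_mem (Or.inr ⟨b, rfl⟩)

lemma SLAux.inf_mem_filter [OrderTop L] {F : Set L} (hF : IsSLFilter F)
    {ι : Type*} (t : Finset ι) (f : ι → L) (h : ∀ i ∈ t, f i ∈ F) :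
    t.inf f ∈ F := by
  classical
  induction t using Finset.induction_on with
  | empty => simpa using SLAux.top_mem hF
  | @insert i t hi ih =>
    rw [Finset.inf_insert]
    exact hF.2.2 _ _ (h i (by simp)) (ih fun j hj => h j (by simp [hj]))

lemma SLAux.compactSpace (L : Type*) [SemilatticeInf L] [OrderTop L] [OrderBot L] :
    CompactSpace (OptSpace L) := by
  rw [← isCompact_univ_iff, isCompact_iff_ultrafilter_le_nhds]
  intro 𝒰 _
  set F : Set L := {a | phiO a ∈ 𝒰} with hFdef
  have hF : IsSLFilter F := by
    refine ⟨⟨⊤, ?_⟩, ?_, ?_⟩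
    · show phiO (⊤ : L) ∈ 𝒰
      rw [SLAux.phiO_top]
      exact Filter.univ_mem
    · intro a b ha hab
      exact Filter.mem_of_superset ha (SLAux.phiO_mono hab)
    · intro a b ha hb
      have : phiO (a ⊓ b) = phiO a ∩ phiO b := by
        ext x
        exact ⟨fun h => ⟨x.optimal.1.2.1 _ _ h inf_le_left,
            x.optimal.1.2.1 _ _ h inf_le_right⟩,
          fun h => x.optimal.1.2.2 _ _ h.1 h.2⟩
      show phiO (a ⊓ b) ∈ 𝒰
      rw [this]
      exact Filter.inter_mem ha hb
  have hopt : IsOptimalFilter F := by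
    refine ⟨hF, ⟨⊥, ?_⟩, ?_⟩
    · show ¬ phiO (⊥ : L) ∈ 𝒰
      rw [SLAux.phiO_bot]
      exact fun h => Filter.empty_notMem (𝒰 : Filter (OptSpace L)) h
    · intro A hAne hA c hc
      have hmem : (⋂ a ∈ A, (phiO a)ᶜ) ∈ 𝒰 := by
        refine (Filter.biInter_finset_mem A).2 fun a ha => ?_
        exact (Ultrafilter.compl_mem_iff_notMem).2 (hA ha)
      have hsub : (⋂ a ∈ A, ((phiO a)ᶜ : Set (OptSpace L))) ⊆ (phiO c)ᶜ := by
        intro x hx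
        have hAx : ↑A ⊆ x.carrierᶜ := fun a ha => (Set.mem_iInter₂.1 hx a ha)
        exact x.optimal.2.2 A hAne hAx c hc
      show ¬ phiO c ∈ 𝒰
      exact (Ultrafilter.compl_mem_iff_notMem).1 (Filter.mem_of_superset hmem hsub)
  refine ⟨⟨F, hopt⟩, Set.mem_univ _, ?_⟩
  show (𝒰 : Filter (OptSpace L)) ≤
    @nhds _ (TopologicalSpace.generateFrom
      ({U | ∃ a : L, U = phiO a} ∪ {U | ∃ b : L, U = (phiO b)ᶜ})) ⟨F, hopt⟩
  rw [TopologicalSpace.nhds_generateFrom]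
  refine le_iInf₂ fun s hs => ?_
  rw [Filter.le_principal_iff]
  obtain ⟨hxs, hsg⟩ := hs
  rcases hsg with ⟨a, rfl⟩ | ⟨b, rfl⟩
  · exact hxs
  · exact (Ultrafilter.compl_mem_iff_notMem).2 hxs

end Auxiliary

/-- A clopen upset U of L_* is of the form φ(a) iff its complement is the
downset of the prime filters outside U. -/
theorem clopen_upset_admissible_iff {L : Type*} [SemilatticeInf L] [OrderTop L]
    [OrderBot L] (hd : IsDistribSL L) (U : Set (OptSpace L))
    (hclopen : IsClopen U)
    (hupper : ∀ u v : OptSpace L, u ∈ U → u.carrier ⊆ v.carrier → v ∈ U) :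
    (∃ a : L, U = phiO a) ↔
      Uᶜ = {x : OptSpace L | ∃ y : OptSpace L,
              (IsSLPrimeFilter y.carrier ∧ y ∉ U) ∧ x.carrier ⊆ y.carrier} := by
  classical
  haveI : CompactSpace (OptSpace L) := SLAux.compactSpace L
  constructor
  · -- U = φ(a) implies the complement condition
    rintro ⟨a, rfl⟩
    ext x
    simp only [Set.mem_compl_iff, Set.mem_setOf_eq]
    constructor
    · intro hax
      have hax' : a ∉ x.carrier := hax
      obtain ⟨P, hPprime, hPopt, hsub, haP⟩ :=
        SLAux.prime_extension hd x.optimal.1 hax'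
      exact ⟨⟨P, hPopt⟩, ⟨hPprime, haP⟩, hsub⟩
    · rintro ⟨y, ⟨_, hyU⟩, hxy⟩ hax
      exact hyU (hxy hax)
  · -- the complement condition implies U = φ(a)
    intro hcond
    have hUcomp : IsCompact U := hclopen.1.isCompact
    have hUccomp : IsCompact Uᶜ := hclopen.2.isClosed_compl.isCompact
    -- Step 1: for every prime y outside U there is c ∉ y with U ⊆ φ(c)
    have key : ∀ y : OptSpace L, IsSLPrimeFilter y.carrier → y ∉ U →
        ∃ c : L, c ∉ y.carrier ∧ U ⊆ phiO c := by
      intro y hy hyU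
      have hax : ∀ x : OptSpace L, x ∈ U → ∃ a, a ∈ x.carrier ∧ a ∉ y.carrier := by
        intro x hx
        by_contra h
        push_neg at h
        exact hyU (hupper x y hx fun a ha => h a ha)
      choose! f hf₁ hf₂ using hax
      have hcov : U ⊆ ⋃ x : {x : OptSpace L // x ∈ U}, phiO (f x.1) := by
        intro x hx
        exact Set.mem_iUnion.2 ⟨⟨x, hx⟩, hf₁ x hx⟩
      obtain ⟨t, ht⟩ := hUcomp.elim_finite_subcover
        (fun x : {x : OptSpace L // x ∈ U} => phiO (f x.1))
        (fun _ => SLAux.isOpen_phiO _) hcov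
      set B : Finset L := t.image (fun x => f x.1) with hBdef
      have hBy : ↑B ⊆ y.carrierᶜ := by
        intro b hb
        simp only [hBdef, Finset.coe_image, Set.mem_image] at hb
        obtain ⟨x, hxt, rfl⟩ := hb
        exact hf₂ x.1 x.2
      have hyne : y.carrierᶜ.Nonempty := by
        obtain ⟨w, hw⟩ := (Set.ne_univ_iff_exists_notMem y.carrier).1 hy.2.1
        exact ⟨w, hw⟩
      obtain ⟨c, hc, hcb⟩ := SLAux.ub_of_directed hyne
        (SLAux.compl_directed_of_prime hy) B hBy
      refine ⟨c, hc, fun x hx => ?_⟩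
      obtain ⟨i, hit, hxi⟩ := Set.mem_iUnion₂.1 (ht hx)
      have hfi : f i.1 ≤ c := hcb _ (Finset.mem_image.2 ⟨i, hit, rfl⟩)
      exact x.optimal.1.2.1 _ _ hxi hfi
    -- choose such c for each prime outside U
    set PY := {y : OptSpace L | IsSLPrimeFilter y.carrier ∧ y ∉ U} with hPYdef
    have key' : ∀ y : PY, ∃ c : L, c ∉ y.1.carrier ∧ U ⊆ phiO c :=
      fun y => key y.1 y.2.1 y.2.2
    choose c hc₁ hc₂ using key'
    -- Step 2: cover Uᶜ by the complements of φ(c y)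
    have hcov2 : Uᶜ ⊆ ⋃ y : PY, (phiO (c y))ᶜ := by
      intro x hx
      rw [hcond] at hx
      obtain ⟨y, hy, hxy⟩ := hx
      refine Set.mem_iUnion.2 ⟨⟨y, hy⟩, ?_⟩
      intro hcx
      exact hc₁ ⟨y, hy⟩ (hxy hcx)
    obtain ⟨t, ht⟩ := hUccomp.elim_finite_subcover (fun y : PY => (phiO (c y))ᶜ)
      (fun y => SLAux.isOpen_compl_phiO (c y)) hcov2
    refine ⟨t.inf c, Set.Subset.antisymm ?_ ?_⟩
    · intro x hx
      exact SLAux.inf_mem_filter x.optimal.1 t c fun y _ => hc₂ y hx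
    · intro x hx
      by_contra hxU
      obtain ⟨y, hyt, hxy⟩ := Set.mem_iUnion₂.1 (ht hxU)
      have : t.inf c ≤ c y := Finset.inf_le hyt
      exact hxy (x.optimal.1.2.1 _ _ hx this)
end
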